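/- Let π ∈ S_n, 1 ≤ i ≤ n-1, with {i, i+1} ∩ {π(i), π(i+1)} = ∅ and π⁻¹(i), π⁻¹(i+1) consecutive integers. Let k = min{π⁻¹(i), π⁻¹(i+1)} and w = (1,2,...,n). If π⁻¹(i) < π⁻¹(i+1), then cdes(w⁻ᵏ π wᵏ) = des(w⁻ᵏ π wᵏ). -/

import Mathlib

/-- Descent number: number of positions `i` (0-indexed, `i+1 < n`) with `π(i) > π(i+1)`. -/
def des {n : ℕ} (π : Equiv.Perm (Fin n)) : ℕ :=
  (Finset.univ.filter (fun i : Fin (n - 1) =>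
    π ⟨i.1 + 1, by have := i.2; omega⟩ < π ⟨i.1, by have := i.2; omega⟩)).card

/-- Cyclic descent number: positions taken cyclically, with `π(n+1) := π(1)`. -/
def cdes {n : ℕ} (π : Equiv.Perm (Fin n)) : ℕ :=
  (Finset.univ.filter (fun i : Fin n =>
    π ⟨(i.1 + 1) % n, Nat.mod_lt _ (by have := i.2; omega)⟩ < π i)).card

lemma finRotate_pow_apply_val {n : ℕ} (k : ℕ) (j : Fin n) :
    (((finRotate n) ^ k) j).1 = (j.1 + k) % n := by
  induction k with
  | zero => simp [Nat.mod_eq_of_lt j.2]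
  | succ k ih =>
    rw [pow_succ', Equiv.Perm.mul_apply]
    cases n with
    | zero => exact j.elim0
    | succ m =>
      rw [finRotate_succ_apply, Fin.val_add, ih]
      rw [show (j.1 + (k+1)) = (j.1 + k) + 1 by ring, Nat.add_mod (j.1+k) 1]
      simp [Nat.mod_mod]

lemma cdes_eq_des_aux {n : ℕ} (hn : 1 ≤ n) (σ : Equiv.Perm (Fin n))
    (h : ¬ σ ⟨0, by omega⟩ < σ ⟨n - 1, by omega⟩) : cdes σ = des σ := by
  unfold cdes des
  have hlt : ∀ a : Fin n, a ∈ Finset.univ.filter (fun i : Fin n =>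
      σ ⟨(i.1 + 1) % n, Nat.mod_lt _ (by have := i.2; omega)⟩ < σ i) → a.1 < n - 1 := by
    intro a ha
    simp only [Finset.mem_filter, Finset.mem_univ, true_and] at ha
    by_contra hcon
    have ha1 : a.1 = n - 1 := by have := a.2; omega
    apply h
    have h0 : ((a.1 + 1) % n) = 0 := by
      rw [ha1, Nat.sub_add_cancel hn, Nat.mod_self]
    have e1 : (⟨(a.1 + 1) % n, Nat.mod_lt _ (by have := a.2; omega)⟩ : Fin n)
        = ⟨0, by omega⟩ := Fin.ext h0
    have e2 : a = (⟨n - 1, by omega⟩ : Fin n) := Fin.ext ha1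
    rw [e1, e2] at ha
    exact ha
  refine Finset.card_bij' (fun a ha => ⟨a.1, hlt a ha⟩)
    (fun b _ => ⟨b.1, by have := b.2; omega⟩) ?_ ?_ ?_ ?_
  · intro a ha
    have hv := hlt a ha
    simp only [Finset.mem_filter, Finset.mem_univ, true_and] at ha ⊢
    have e1 : (⟨(a.1 + 1) % n, Nat.mod_lt _ (by have := a.2; omega)⟩ : Fin n)
        = ⟨a.1 + 1, by omega⟩ := Fin.ext (Nat.mod_eq_of_lt (by omega))
    rw [e1] at ha
    exact ha
  · intro b hb
    simp only [Finset.mem_filter, Finset.mem_univ, true_and] at hb ⊢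
    have hb2 := b.2
    have e1 : (⟨(b.1 + 1) % n, Nat.mod_lt _ (by omega)⟩ : Fin n)
        = ⟨b.1 + 1, by omega⟩ := Fin.ext (Nat.mod_eq_of_lt (by omega))
    rw [e1]
    exact hb
  · intro a ha; rfl
  · intro b hb; rfl

theorem Equiv.Perm.apply_inv_self {α : Type*} (f : Equiv.Perm α) (x : α) :
    f (f⁻¹ x) = x := f.apply_symm_apply x

theorem cdes_eq_des_of_lt {n : ℕ} (π : Equiv.Perm (Fin n)) (i : ℕ) (hi : i + 1 < n) :
    let p : Fin n := ⟨i, by omega⟩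
    let q : Fin n := ⟨i + 1, hi⟩
    let k : ℕ := min ((π⁻¹ p : Fin n) : ℕ) ((π⁻¹ q : Fin n) : ℕ) + 1
    let w := finRotate n
    (({p, q} ∩ {π p, π q} : Finset (Fin n)) = ∅) →
    ((((π⁻¹ p : Fin n) : ℕ) : ℤ) - (((π⁻¹ q : Fin n) : ℕ) : ℤ)).natAbs = 1 →
    π⁻¹ p < π⁻¹ q →
    cdes ((w ^ k)⁻¹ * π * w ^ k) = des ((w ^ k)⁻¹ * π * w ^ k) := by
  intro p q k w hdisj hd hlt
  have hw : w = finRotate n := rfl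
  have hk : k = min ((π⁻¹ p : Fin n) : ℕ) ((π⁻¹ q : Fin n) : ℕ) + 1 := rfl
  have hp1 : (p : Fin n).1 = i := rfl
  have hq1 : (q : Fin n).1 = i + 1 := rfl
  have hltv : ((π⁻¹ p : Fin n) : ℕ) < ((π⁻¹ q : Fin n) : ℕ) := hlt
  have hval : ((π⁻¹ q : Fin n) : ℕ) = ((π⁻¹ p : Fin n) : ℕ) + 1 := by
    rcases Int.natAbs_eq ((((π⁻¹ p : Fin n) : ℕ) : ℤ) - (((π⁻¹ q : Fin n) : ℕ) : ℤ)) with h'|h' <;>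
      omega
  have hk1 : 1 ≤ k := by omega
  have hk2 : k < n := by have := (π⁻¹ q : Fin n).2; omega
  have hne : π p ≠ p := by
    intro hpp
    have hm : p ∈ ({p, q} ∩ {π p, π q} : Finset (Fin n)) := by
      simp [Finset.mem_inter, hpp]
    rw [hdisj] at hm
    exact absurd hm (Finset.notMem_empty p)
  have hki : k ≠ i + 1 := by
    intro hkk
    apply hne
    have h1 : (π⁻¹ p : Fin n) = p := Fin.ext (by omega)
    have h2 := congrArg π h1
    rw [Equiv.Perm.apply_inv_self] at h2
    exact h2.symm
  rw [hw]
  apply cdes_eq_des_aux (by omega)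
  intro hcon
  simp only [Equiv.Perm.mul_apply] at hcon
  have e0 : (finRotate n ^ k) ⟨0, by omega⟩ = π⁻¹ q := by
    apply Fin.ext
    rw [finRotate_pow_apply_val]
    simp only [Fin.val_mk]
    rw [Nat.zero_add, Nat.mod_eq_of_lt hk2]
    omega
  have e1 : (finRotate n ^ k) ⟨n - 1, by omega⟩ = π⁻¹ p := by
    apply Fin.ext
    rw [finRotate_pow_apply_val]
    simp only [Fin.val_mk]
    rw [Nat.mod_eq_sub_mod (by omega), show n - 1 + k - n = k - 1 by omega,
      Nat.mod_eq_of_lt (by omega)]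
    omega
  rw [e0, e1, Equiv.Perm.apply_inv_self, Equiv.Perm.apply_inv_self] at hcon
  have hAv : (((finRotate n ^ k) ((finRotate n ^ k)⁻¹ p)) : Fin n).1 = i := by
    rw [Equiv.Perm.apply_inv_self]
  have hBv : (((finRotate n ^ k) ((finRotate n ^ k)⁻¹ q)) : Fin n).1 = i + 1 := by
    rw [Equiv.Perm.apply_inv_self]
  rw [finRotate_pow_apply_val] at hAv hBv
  have hA2 := ((finRotate n ^ k)⁻¹ p : Fin n).2
  have hB2 := ((finRotate n ^ k)⁻¹ q : Fin n).2
  have hc : (((finRotate n ^ k)⁻¹ q : Fin n) : ℕ) < (((finRotate n ^ k)⁻¹ p : Fin n) : ℕ) := hcon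
  have hAcase : (((finRotate n ^ k)⁻¹ p : Fin n) : ℕ) + k = i ∨
      (((finRotate n ^ k)⁻¹ p : Fin n) : ℕ) + k = i + n := by
    rcases Nat.lt_or_ge ((((finRotate n ^ k)⁻¹ p : Fin n) : ℕ) + k) n with h'|h'
    · left; rw [Nat.mod_eq_of_lt h'] at hAv; omega
    · right; rw [Nat.mod_eq_sub_mod h', Nat.mod_eq_of_lt (by omega)] at hAv; omega
  have hBcase : (((finRotate n ^ k)⁻¹ q : Fin n) : ℕ) + k = i + 1 ∨
      (((finRotate n ^ k)⁻¹ q : Fin n) : ℕ) + k = i + 1 + n := by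
    rcases Nat.lt_or_ge ((((finRotate n ^ k)⁻¹ q : Fin n) : ℕ) + k) n with h'|h'
    · left; rw [Nat.mod_eq_of_lt h'] at hBv; omega
    · right; rw [Nat.mod_eq_sub_mod h', Nat.mod_eq_of_lt (by omega)] at hBv; omega
  omega
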